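/- arXiv:1707.00127 — 5 statements merged into one kernel-verified Lean document; each statement's English description precedes it below -/
import Mathlib

section
/- Fix n ≥ 1 and x, y ∈ [0,1]. Define the polynomial g(z) = z^{−2}·((1 + ((x+y)/2)·z)^{2n} − (1+x·z)^n·(1+y·z)^n), i.e., g(z) = ((x−y)²/4)·∑_{k=0}^{n−1} (1 + ((x+y)/2)·z)^{2(n−1−k)}·(1+x·z)^k·(1+y·z)^k. Then g^{(k)}(−1) ≥ 0 for all k = 0, 1, …, 2n−2. -/
open Polynomial

/-- Polynomials all of whose coefficients are nonnegative. -/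
def NNCoeff (p : ℝ[X]) : Prop := ∀ i, 0 ≤ p.coeff i

lemma NNCoeff.add {p q : ℝ[X]} (hp : NNCoeff p) (hq : NNCoeff q) : NNCoeff (p + q) := by
  intro i; rw [coeff_add]; exact add_nonneg (hp i) (hq i)

lemma NNCoeff.mul {p q : ℝ[X]} (hp : NNCoeff p) (hq : NNCoeff q) : NNCoeff (p * q) := by
  intro i; rw [coeff_mul]
  exact Finset.sum_nonneg fun ij _ => mul_nonneg (hp _) (hq _)

lemma NNCoeff.pow {p : ℝ[X]} (hp : NNCoeff p) (m : ℕ) : NNCoeff (p ^ m) := by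
  induction m with
  | zero => intro i; simp [coeff_one]; positivity
  | succ m ih => rw [pow_succ]; exact ih.mul hp

lemma NNCoeff.C {a : ℝ} (ha : 0 ≤ a) : NNCoeff (Polynomial.C a) := by
  intro i; simp [coeff_C]; positivity

lemma NNCoeff.X : NNCoeff (Polynomial.X : ℝ[X]) := by
  intro i; simp [coeff_X]; positivity

lemma NNCoeff.sum {s : Finset ℕ} {f : ℕ → ℝ[X]} (h : ∀ i ∈ s, NNCoeff (f i)) :
    NNCoeff (∑ i ∈ s, f i) := by
  intro i
  rw [Polynomial.finset_sum_coeff]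
  exact Finset.sum_nonneg fun j hj => h j hj i

lemma NNCoeff.derivative {p : ℝ[X]} (hp : NNCoeff p) : NNCoeff (Polynomial.derivative p) := by
  intro i
  rw [coeff_derivative]
  exact mul_nonneg (hp _) (by positivity)

lemma NNCoeff.iter_derivative {p : ℝ[X]} (hp : NNCoeff p) (m : ℕ) :
    NNCoeff (Polynomial.derivative^[m] p) := by
  induction m with
  | zero => exact hp
  | succ m ih => rw [Function.iterate_succ_apply']; exact ih.derivative

lemma iteratedDeriv_polynomial (p : ℝ[X]) (m : ℕ) :
    iteratedDeriv m (fun z : ℝ => p.eval z) = fun z => (Polynomial.derivative^[m] p).eval z := by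
  induction m with
  | zero => simp
  | succ m ih =>
    rw [iteratedDeriv_succ, ih, Function.iterate_succ_apply']
    funext z
    exact Polynomial.deriv (𝕜 := ℝ) _

lemma iter_derivative_comp_X_add_one (p : ℝ[X]) (m : ℕ) :
    Polynomial.derivative^[m] (p.comp (X + Polynomial.C 1)) =
      (Polynomial.derivative^[m] p).comp (X + Polynomial.C 1) := by
  induction m with
  | zero => rfl
  | succ m ih =>
    rw [Function.iterate_succ_apply', ih, Polynomial.derivative_comp,
      Function.iterate_succ_apply']
    simp

theorem stmt_2 (n : ℕ) (hn : 1 ≤ n) (x y : ℝ)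
    (hx : x ∈ Set.Icc (0 : ℝ) 1) (hy : y ∈ Set.Icc (0 : ℝ) 1)
    (g : ℝ → ℝ)
    (hg : ∀ z : ℝ, g z = ((x - y) ^ 2 / 4) *
        ∑ k ∈ Finset.range n,
          (1 + ((x + y) / 2) * z) ^ (2 * (n - 1 - k)) * (1 + x * z) ^ k * (1 + y * z) ^ k)
    (k : ℕ) (hk : k ≤ 2 * n - 2) :
    0 ≤ iteratedDeriv k g (-1) := by
  obtain ⟨hx0, hx1⟩ := hx
  obtain ⟨hy0, hy1⟩ := hy
  set m : ℝ := (x + y) / 2 with hm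
  -- the shifted polynomial: evaluating at z+1 gives g z
  set P : ℝ[X] := Polynomial.C ((x - y) ^ 2 / 4) *
      ∑ j ∈ Finset.range n,
        (Polynomial.C (1 - m) + Polynomial.C m * X) ^ (2 * (n - 1 - j)) *
        (Polynomial.C (1 - x) + Polynomial.C x * X) ^ j *
        (Polynomial.C (1 - y) + Polynomial.C y * X) ^ j with hP
  have hm0 : 0 ≤ m := by rw [hm]; linarith
  have hm1 : m ≤ 1 := by rw [hm]; linarith
  have hPnn : NNCoeff P := by
    apply NNCoeff.mul (NNCoeff.C (by positivity))
    apply NNCoeff.sum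
    intro j _
    exact (((NNCoeff.C (by linarith)).add ((NNCoeff.C hm0).mul NNCoeff.X)).pow _).mul
      (((NNCoeff.C (by linarith)).add ((NNCoeff.C hx0).mul NNCoeff.X)).pow _) |>.mul
      (((NNCoeff.C (by linarith)).add ((NNCoeff.C hy0).mul NNCoeff.X)).pow _)
  have hgP : g = fun z : ℝ => (P.comp (X + Polynomial.C 1)).eval z := by
    funext z
    rw [hg]
    simp only [hP, eval_comp, eval_mul, eval_C, eval_add, eval_X, eval_finset_sum, eval_pow]
    congr 1
    apply Finset.sum_congr rfl
    intro j _
    ring_nf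
  rw [hgP, iteratedDeriv_polynomial, iter_derivative_comp_X_add_one]
  simp only [eval_comp, eval_add, eval_X, eval_C]
  norm_num
  have := (hPnn.iter_derivative k) 0
  rwa [Polynomial.coeff_zero_eq_eval_zero] at this
end

section
/- Let n ≥ 1, x, y ∈ [0,1], and let a_0, …, a_{2n} be real numbers. Let p_{n,ν}(t) = C(n,ν) t^ν (1−t)^{n−ν} denote the Bernstein basis polynomials and let g(z) = z^{−2}·((1 + ((x+y)/2)z)^{2n} − (1+xz)^n(1+yz)^n), a polynomial of degree at most 2n−2. Then ∑_{i=0}^{n} ∑_{j=0}^{n} [p_{n,i}((x+y)/2)·p_{n,j}((x+y)/2) − p_{n,i}(x)·p_{n,j}(y)]·a_{i+j} = ∑_{k=0}^{2n−2} (Δ²a_k)·g^{(k)}(−1)/k!, where Δ²a_k = a_{k+2} − 2a_{k+1} + a_k. -/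
/-- Bernstein basis polynomial `p_{n,ν}(t) = C(n,ν) t^ν (1-t)^{n-ν}`. -/
noncomputable def bp (n ν : ℕ) (t : ℝ) : ℝ := (n.choose ν : ℝ) * t ^ ν * (1 - t) ^ (n - ν)

lemma bin_bp (n : ℕ) (u : ℝ) :
    (Polynomial.C u * Polynomial.X + Polynomial.C (1 - u)) ^ n
      = ∑ i ∈ Finset.range (n + 1), Polynomial.C (bp n i u) * Polynomial.X ^ i := by
  rw [add_pow]
  refine Finset.sum_congr rfl fun i hi => ?_
  simp only [bp, mul_pow, map_mul, map_pow, Polynomial.C_eq_natCast]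
  ring

lemma iterderiv_poly (P : Polynomial ℝ) (k : ℕ) :
    iteratedDeriv k (fun z => P.eval z) = fun z => (Polynomial.derivative^[k] P).eval z := by
  induction k with
  | zero => simp
  | succ k ih =>
    rw [iteratedDeriv_succ, ih]
    funext z
    rw [Function.iterate_succ_apply']
    exact Polynomial.deriv (p := Polynomial.derivative^[k] P)

noncomputable def Lmap (a : ℕ → ℝ) (N : ℕ) : Polynomial ℝ →ₗ[ℝ] ℝ :=
  ∑ m ∈ Finset.range N, a m • (Polynomial.lcoeff ℝ m)

lemma Lmap_apply (a : ℕ → ℝ) (N : ℕ) (p : Polynomial ℝ) :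
    Lmap a N p = ∑ m ∈ Finset.range N, a m * p.coeff m := by
  simp [Lmap, LinearMap.sum_apply]

lemma Lmap_monomial (a : ℕ → ℝ) (N k : ℕ) (hk : k < N) (c : ℝ) :
    Lmap a N (Polynomial.C c * Polynomial.X ^ k) = c * a k := by
  rw [Lmap_apply]
  rw [Finset.sum_eq_single k]
  · simp [Polynomial.coeff_C_mul, Polynomial.coeff_X_pow]; ring
  · intro m _ hm; simp [Polynomial.coeff_C_mul, Polynomial.coeff_X_pow, hm]
  · intro h; exact absurd (Finset.mem_range.mpr hk) h

theorem stmt_3 (n : ℕ) (hn : 1 ≤ n) (x y : ℝ)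
    (hx : x ∈ Set.Icc (0 : ℝ) 1) (hy : y ∈ Set.Icc (0 : ℝ) 1)
    (a : ℕ → ℝ)
    (g : ℝ → ℝ)
    (hg : ∀ z : ℝ, z ≠ 0 → g z =
        ((1 + ((x + y) / 2) * z) ^ (2 * n) - (1 + x * z) ^ n * (1 + y * z) ^ n) / z ^ 2)
    (hgpoly : ∃ P : Polynomial ℝ, P.degree ≤ (2 * n - 2 : ℕ) ∧ ∀ z : ℝ, g z = P.eval z) :
    ∑ i ∈ Finset.range (n + 1), ∑ j ∈ Finset.range (n + 1),
        (bp n i ((x + y) / 2) * bp n j ((x + y) / 2) - bp n i x * bp n j y) * a (i + j) =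
      ∑ k ∈ Finset.range (2 * n - 1),
        (a (k + 2) - 2 * a (k + 1) + a k) * iteratedDeriv k g (-1) / (k.factorial : ℝ) := by
  classical
  obtain ⟨P, hPdeg, hPeval⟩ := hgpoly
  set s : ℝ := (x + y) / 2 with hs
  set Q : Polynomial ℝ := Polynomial.taylor (-1) P with hQ
  set F : Polynomial ℝ := (Polynomial.C s * Polynomial.X + Polynomial.C (1 - s)) ^ (2 * n)
      - (Polynomial.C x * Polynomial.X + Polynomial.C (1 - x)) ^ n
        * (Polynomial.C y * Polynomial.X + Polynomial.C (1 - y)) ^ n with hF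
  have hQeval : ∀ z : ℝ, Q.eval z = g (z - 1) := by
    intro z
    rw [hQ, Polynomial.taylor_apply, Polynomial.eval_comp]
    simp only [Polynomial.eval_add, Polynomial.eval_X, Polynomial.eval_C]
    rw [hPeval (z - 1)]
    norm_num [sub_eq_add_neg]
  -- Key polynomial identity
  have key : F = (Polynomial.X - Polynomial.C 1) ^ 2 * Q := by
    apply Polynomial.funext
    intro z
    simp only [hF, Polynomial.eval_sub, Polynomial.eval_mul, Polynomial.eval_pow,
      Polynomial.eval_add, Polynomial.eval_X, Polynomial.eval_C]
    rw [hQeval z]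
    by_cases hz : z = 1
    · subst hz
      norm_num
    · have hz' : z - 1 ≠ 0 := sub_ne_zero.mpr hz
      rw [hg (z - 1) hz']
      rw [hs] at *
      field_simp
      ring
  -- degree of Q
  have hQdeg : Q.natDegree < 2 * n - 1 := by
    have h1 : P.natDegree ≤ 2 * n - 2 := Polynomial.natDegree_le_iff_degree_le.mpr hPdeg
    rw [hQ, Polynomial.natDegree_taylor]
    omega
  have hQsum : Q = ∑ k ∈ Finset.range (2 * n - 1),
      Polynomial.C (Q.coeff k) * Polynomial.X ^ k := by
    conv_lhs => rw [Polynomial.as_sum_range' Q _ hQdeg]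
    simp [Polynomial.C_mul_X_pow_eq_monomial]
  -- First evaluation of L F : as the bilinear Bernstein sum
  have hLF1 : Lmap a (2 * n + 1) F =
      ∑ i ∈ Finset.range (n + 1), ∑ j ∈ Finset.range (n + 1),
        (bp n i s * bp n j s - bp n i x * bp n j y) * a (i + j) := by
    have e1 : (Polynomial.C s * Polynomial.X + Polynomial.C (1 - s)) ^ (2 * n)
        = (Polynomial.C s * Polynomial.X + Polynomial.C (1 - s)) ^ n
          * (Polynomial.C s * Polynomial.X + Polynomial.C (1 - s)) ^ n := by
      rw [← pow_add, two_mul]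
    rw [hF, e1, bin_bp n s, bin_bp n x, bin_bp n y, Finset.sum_mul_sum, Finset.sum_mul_sum]
    rw [← Finset.sum_sub_distrib]
    rw [map_sum]
    refine Finset.sum_congr rfl fun i hi => ?_
    rw [← Finset.sum_sub_distrib, map_sum]
    refine Finset.sum_congr rfl fun j hj => ?_
    have hij : i + j < 2 * n + 1 := by
      have := Finset.mem_range.mp hi
      have := Finset.mem_range.mp hj
      omega
    have e2 : ∀ c d : ℝ, (Polynomial.C c * Polynomial.X ^ i) * (Polynomial.C d * Polynomial.X ^ j)
        = Polynomial.C (c * d) * Polynomial.X ^ (i + j) := by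
      intro c d
      rw [map_mul, pow_add]
      ring
    rw [e2, e2, map_sub, Lmap_monomial a _ _ hij, Lmap_monomial a _ _ hij]
    ring
  -- Second evaluation of L F : via Q coefficients
  have hLF2 : Lmap a (2 * n + 1) F =
      ∑ k ∈ Finset.range (2 * n - 1), Q.coeff k * (a (k + 2) - 2 * a (k + 1) + a k) := by
    rw [key]
    conv_lhs => rw [hQsum]
    rw [Finset.mul_sum, map_sum]
    refine Finset.sum_congr rfl fun k hk => ?_
    have hk' : k < 2 * n - 1 := Finset.mem_range.mp hk
    have hterm : (Polynomial.X - Polynomial.C 1) ^ 2 * (Polynomial.C (Q.coeff k) * Polynomial.X ^ k)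
        = Polynomial.C (Q.coeff k) * Polynomial.X ^ (k + 2)
          - Polynomial.C (2 * Q.coeff k) * Polynomial.X ^ (k + 1)
          + Polynomial.C (Q.coeff k) * Polynomial.X ^ k := by
      have h2 : Polynomial.C (2 * Q.coeff k) = 2 * Polynomial.C (Q.coeff k) := by
        rw [map_mul, map_ofNat]
      rw [h2, map_one]
      ring
    rw [hterm, map_add, map_sub,
      Lmap_monomial a _ _ (by omega), Lmap_monomial a _ _ (by omega),
      Lmap_monomial a _ _ (by omega)]
    ring
  -- the RHS coefficients
  have hcoeff : ∀ k : ℕ, iteratedDeriv k g (-1) = (k.factorial : ℝ) * Q.coeff k := by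
    intro k
    have hgP : g = fun z => P.eval z := funext hPeval
    rw [hgP, iterderiv_poly, hQ, Polynomial.taylor_coeff]
    have h1 : Polynomial.derivative^[k] P = k.factorial • Polynomial.hasseDeriv k P := by
      rw [← Polynomial.factorial_smul_hasseDeriv (R := ℝ) k]
      rfl
    rw [h1]
    simp [Polynomial.eval_smul, nsmul_eq_mul]
  calc ∑ i ∈ Finset.range (n + 1), ∑ j ∈ Finset.range (n + 1),
        (bp n i ((x + y) / 2) * bp n j ((x + y) / 2) - bp n i x * bp n j y) * a (i + j)
      = Lmap a (2 * n + 1) F := hLF1.symm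
    _ = ∑ k ∈ Finset.range (2 * n - 1), Q.coeff k * (a (k + 2) - 2 * a (k + 1) + a k) := hLF2
    _ = _ := by
        refine Finset.sum_congr rfl fun k hk => ?_
        rw [hcoeff k]
        have : (k.factorial : ℝ) ≠ 0 := Nat.cast_ne_zero.mpr k.factorial_ne_zero
        field_simp
end

section
/- Let n ≥ 1 and let f : [0,1] → ℝ be continuous and convex. Then for all x, y ∈ [0,1], (B_{2n}f)((x+y)/2) ≥ ∑_{i=0}^{n} ∑_{j=0}^{n} p_{n,i}(x)·p_{n,j}(y)·f((i+j)/(2n)). -/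
/-- Bernstein polynomial `(B_m f)(t) = ∑_{ν=0}^m p_{m,ν}(t) f(ν/m)`. -/
noncomputable def bern (m : ℕ) (f : ℝ → ℝ) (t : ℝ) : ℝ :=
  ∑ ν ∈ Finset.range (m + 1), bp m ν t * f ((ν : ℝ) / m)

lemma bp_nonneg {n ν : ℕ} {t : ℝ} (ht : t ∈ Set.Icc (0:ℝ) 1) : 0 ≤ bp n ν t := by
  have h1 : (0:ℝ) ≤ t := ht.1
  have h2 : (0:ℝ) ≤ 1 - t := by linarith [ht.2]
  unfold bp
  positivity

lemma bp_top (ℓ : ℕ) (a : ℝ) : bp ℓ (ℓ+1) a = 0 := by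
  unfold bp
  rw [Nat.choose_eq_zero_of_lt (by omega)]
  simp

lemma bp_zero_succ (ℓ : ℕ) (a : ℝ) : bp (ℓ+1) 0 a = (1-a) * bp ℓ 0 a := by
  unfold bp; simp [pow_succ]; ring

lemma bp_rec (ℓ i : ℕ) (a : ℝ) :
    bp (ℓ+1) (i+1) a = a * bp ℓ i a + (1 - a) * bp ℓ (i+1) a := by
  rcases lt_or_ge i ℓ with h | h
  · unfold bp
    rw [Nat.choose_succ_succ]
    have h1 : ℓ + 1 - (i+1) = (ℓ - (i+1)) + 1 := by omega
    have h2 : ℓ - i = (ℓ - (i+1)) + 1 := by omega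
    rw [h1, h2]
    push_cast
    ring
  · rcases eq_or_lt_of_le h with rfl | h'
    · unfold bp
      rw [Nat.choose_eq_zero_of_lt (Nat.lt_succ_self _)]
      simp [pow_succ]
      ring
    · unfold bp
      rw [Nat.choose_eq_zero_of_lt (by omega : ℓ < i + 1),
        Nat.choose_eq_zero_of_lt (by omega : ℓ < i),
        Nat.choose_eq_zero_of_lt (by omega : ℓ + 1 < i + 1)]
      simp

lemma step (ℓ : ℕ) (a : ℝ) (h : ℕ → ℝ) :
    ∑ i ∈ Finset.range (ℓ+2), bp (ℓ+1) i a * h i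
      = ∑ i ∈ Finset.range (ℓ+1), bp ℓ i a * ((1-a) * h i + a * h (i+1)) := by
  rw [Finset.sum_range_succ' (fun i => bp (ℓ+1) i a * h i)]
  have e1 : ∑ i ∈ Finset.range (ℓ+1), bp (ℓ+1) (i+1) a * h (i+1)
      = ∑ i ∈ Finset.range (ℓ+1), (a * (bp ℓ i a * h (i+1)) + (1-a) * (bp ℓ (i+1) a * h (i+1))) := by
    apply Finset.sum_congr rfl
    intro i _
    rw [bp_rec]; ring
  have e2 : ∑ i ∈ Finset.range (ℓ+2), (1-a) * (bp ℓ i a * h i)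
      = ∑ i ∈ Finset.range (ℓ+1), (1-a) * (bp ℓ (i+1) a * h (i+1)) + (1-a) * (bp ℓ 0 a * h 0) :=
    Finset.sum_range_succ' _ _
  have e3 : ∑ i ∈ Finset.range (ℓ+2), (1-a) * (bp ℓ i a * h i)
      = ∑ i ∈ Finset.range (ℓ+1), (1-a) * (bp ℓ i a * h i) := by
    rw [Finset.sum_range_succ, bp_top]
    simp
  rw [e1, Finset.sum_add_distrib, bp_zero_succ]
  have e4 : ∑ i ∈ Finset.range (ℓ+1), (1-a) * (bp ℓ (i+1) a * h (i+1))
      = ∑ i ∈ Finset.range (ℓ+1), (1-a) * (bp ℓ i a * h i) - (1-a) * (bp ℓ 0 a * h 0) := by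
    rw [← e3, e2]; ring
  rw [e4]
  rw [show ∀ S T : ℝ, S + (T - (1-a)*(bp ℓ 0 a * h 0)) + (1-a) * bp ℓ 0 a * h 0 = S + T by intro S T; ring]
  rw [← Finset.sum_add_distrib]
  apply Finset.sum_congr rfl
  intro i _
  ring

lemma comb (s : Finset ℕ) (c a b : ℝ) (F G : ℕ → ℝ) :
    c * (a * ∑ j ∈ s, F j + b * ∑ j ∈ s, G j) = ∑ j ∈ s, c * (a * F j + b * G j) := by
  rw [Finset.mul_sum, Finset.mul_sum, ← Finset.sum_add_distrib, Finset.mul_sum]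

lemma key (x y : ℝ) (hx : x ∈ Set.Icc (0:ℝ) 1) (hy : y ∈ Set.Icc (0:ℝ) 1) :
    ∀ ℓ : ℕ, ∀ g : ℕ → ℝ, (∀ u, u + 2 ≤ 2*ℓ → 2 * g (u+1) ≤ g u + g (u+2)) →
    ∑ i ∈ Finset.range (ℓ+1), ∑ j ∈ Finset.range (ℓ+1), bp ℓ i x * bp ℓ j y * g (i+j)
      ≤ ∑ k ∈ Finset.range (2*ℓ+1), bp (2*ℓ) k ((x+y)/2) * g k := by
  intro ℓ
  induction ℓ with
  | zero => intro g _; simp [bp]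
  | succ ℓ IH =>
    intro g hg
    set m : ℝ := (x+y)/2 with hm_def
    have hm : m ∈ Set.Icc (0:ℝ) 1 := by
      constructor
      · simp only [hm_def]; linarith [hx.1, hy.1]
      · simp only [hm_def]; linarith [hx.2, hy.2]
    set Tg : ℕ → ℝ := fun u => (1-m)^2 * g u + 2*m*(1-m) * g (u+1) + m^2 * g (u+2) with hTg
    -- Step 1: rewrite LHS using `step` in each variable
    have L1 : ∑ i ∈ Finset.range (ℓ+2), ∑ j ∈ Finset.range (ℓ+2),
        bp (ℓ+1) i x * bp (ℓ+1) j y * g (i+j)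
        = ∑ i ∈ Finset.range (ℓ+1), ∑ j ∈ Finset.range (ℓ+1), bp ℓ i x * bp ℓ j y *
          ((1-x)*((1-y)*g (i+j) + y*g (i+j+1)) + x*((1-y)*g (i+j+1) + y*g (i+j+2))) := by
      have inner : ∀ i, ∑ j ∈ Finset.range (ℓ+2), bp (ℓ+1) i x * bp (ℓ+1) j y * g (i+j)
          = bp (ℓ+1) i x * ∑ j ∈ Finset.range (ℓ+1), bp ℓ j y * ((1-y)*g (i+j) + y*g (i+j+1)) := by
        intro i
        rw [show (∑ j ∈ Finset.range (ℓ+2), bp (ℓ+1) i x * bp (ℓ+1) j y * g (i+j))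
            = bp (ℓ+1) i x * ∑ j ∈ Finset.range (ℓ+2), bp (ℓ+1) j y * g (i+j) by
          rw [Finset.mul_sum]; exact Finset.sum_congr rfl (fun j _ => by ring)]
        rw [step ℓ y (fun j => g (i+j))]
        congr 1
      calc ∑ i ∈ Finset.range (ℓ+2), ∑ j ∈ Finset.range (ℓ+2),
            bp (ℓ+1) i x * bp (ℓ+1) j y * g (i+j)
          = ∑ i ∈ Finset.range (ℓ+2), bp (ℓ+1) i x *
              ∑ j ∈ Finset.range (ℓ+1), bp ℓ j y * ((1-y)*g (i+j) + y*g (i+j+1)) := by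
            exact Finset.sum_congr rfl (fun i _ => inner i)
        _ = ∑ i ∈ Finset.range (ℓ+1), bp ℓ i x *
              ((1-x) * (∑ j ∈ Finset.range (ℓ+1), bp ℓ j y * ((1-y)*g (i+j) + y*g (i+j+1)))
               + x * (∑ j ∈ Finset.range (ℓ+1), bp ℓ j y * ((1-y)*g (i+1+j) + y*g (i+1+j+1)))) := by
            exact step ℓ x (fun i => ∑ j ∈ Finset.range (ℓ+1), bp ℓ j y * ((1-y)*g (i+j) + y*g (i+j+1)))
        _ = ∑ i ∈ Finset.range (ℓ+1), ∑ j ∈ Finset.range (ℓ+1), bp ℓ i x * bp ℓ j y *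
              ((1-x)*((1-y)*g (i+j) + y*g (i+j+1)) + x*((1-y)*g (i+j+1) + y*g (i+j+2))) := by
            apply Finset.sum_congr rfl
            intro i _
            rw [comb]
            apply Finset.sum_congr rfl
            intro j _
            have e1 : i + 1 + j = i + j + 1 := by omega
            have e2 : i + 1 + j + 1 = i + j + 2 := by omega
            simp only [e1, e2]
            ring
    -- Step 2: pointwise bound by Tg
    have L2 : ∑ i ∈ Finset.range (ℓ+1), ∑ j ∈ Finset.range (ℓ+1), bp ℓ i x * bp ℓ j y *
          ((1-x)*((1-y)*g (i+j) + y*g (i+j+1)) + x*((1-y)*g (i+j+1) + y*g (i+j+2)))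
        ≤ ∑ i ∈ Finset.range (ℓ+1), ∑ j ∈ Finset.range (ℓ+1), bp ℓ i x * bp ℓ j y * Tg (i+j) := by
      apply Finset.sum_le_sum
      intro i hi
      apply Finset.sum_le_sum
      intro j hj
      have hij : i + j + 2 ≤ 2*(ℓ+1) := by
        simp only [Finset.mem_range] at hi hj
        omega
      have hconv := hg (i+j) hij
      have hd : (0:ℝ) ≤ ((x-y)/2)^2 := sq_nonneg _
      have hbp : (0:ℝ) ≤ bp ℓ i x * bp ℓ j y := mul_nonneg (bp_nonneg hx) (bp_nonneg hy)
      apply mul_le_mul_of_nonneg_left _ hbp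
      have key : Tg (i+j) - ((1-x)*((1-y)*g (i+j) + y*g (i+j+1)) + x*((1-y)*g (i+j+1) + y*g (i+j+2)))
          = ((x-y)/2)^2 * (g (i+j) - 2*g (i+j+1) + g (i+j+2)) := by
        simp only [hTg, hm_def]
        ring
      rw [← sub_nonneg, key]
      exact mul_nonneg hd (by linarith)
    -- Step 3: IH applied to Tg
    have hTgconv : ∀ u, u + 2 ≤ 2*ℓ → 2 * Tg (u+1) ≤ Tg u + Tg (u+2) := by
      intro u hu
      have c1 := hg u (by omega)
      have c2 := hg (u+1) (by omega)
      have c3 := hg (u+2) (by omega)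
      have h1 : (0:ℝ) ≤ (1-m)^2 := sq_nonneg _
      have h2 : (0:ℝ) ≤ m^2 := sq_nonneg _
      have h3 : (0:ℝ) ≤ 2*m*(1-m) := by nlinarith [hm.1, hm.2]
      simp only [hTg]
      have e1 : u + 1 + 1 = u + 2 := by omega
      have e2 : u + 1 + 2 = u + 3 := by omega
      have e3 : u + 2 + 1 = u + 3 := by omega
      have e4 : u + 2 + 2 = u + 4 := by omega
      rw [e1, e2, e3, e4]
      nlinarith [mul_le_mul_of_nonneg_left c1 h1, mul_le_mul_of_nonneg_left c2 h3,
        mul_le_mul_of_nonneg_left c3 h2]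
    have L3 := IH Tg hTgconv
    -- Step 4: RHS identity
    have L4 : ∑ k ∈ Finset.range (2*ℓ+1), bp (2*ℓ) k m * Tg k
        = ∑ k ∈ Finset.range (2*(ℓ+1)+1), bp (2*(ℓ+1)) k m * g k := by
      have e0 : 2*(ℓ+1)+1 = (2*ℓ+1)+2 := by omega
      have e1 : 2*(ℓ+1) = (2*ℓ+1)+1 := by omega
      rw [e0, e1, step (2*ℓ+1) m g]
      have e2 : 2*ℓ+1+1 = 2*ℓ+2 := by omega
      have e3 : 2*ℓ+1 = 2*ℓ+1 := rfl
      rw [e2, show (2*ℓ+2) = (2*ℓ)+2 by omega,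
        step (2*ℓ) m (fun k => (1-m) * g k + m * g (k+1))]
      apply Finset.sum_congr rfl
      intro k _
      simp only [hTg]
      ring
    calc ∑ i ∈ Finset.range (ℓ+1+1), ∑ j ∈ Finset.range (ℓ+1+1),
          bp (ℓ+1) i x * bp (ℓ+1) j y * g (i+j)
        ≤ ∑ i ∈ Finset.range (ℓ+1), ∑ j ∈ Finset.range (ℓ+1), bp ℓ i x * bp ℓ j y * Tg (i+j) := by
          rw [show ℓ+1+1 = ℓ+2 from rfl, L1]; exact L2
      _ ≤ ∑ k ∈ Finset.range (2*ℓ+1), bp (2*ℓ) k m * Tg k := L3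
      _ = ∑ k ∈ Finset.range (2*(ℓ+1)+1), bp (2*(ℓ+1)) k m * g k := L4


theorem stmt_4 (n : ℕ) (hn : 1 ≤ n) (f : ℝ → ℝ)
    (hf_cont : ContinuousOn f (Set.Icc (0 : ℝ) 1))
    (hf_conv : ConvexOn ℝ (Set.Icc (0 : ℝ) 1) f)
    (x y : ℝ) (hx : x ∈ Set.Icc (0 : ℝ) 1) (hy : y ∈ Set.Icc (0 : ℝ) 1) :
    bern (2 * n) f ((x + y) / 2) ≥
      ∑ i ∈ Finset.range (n + 1), ∑ j ∈ Finset.range (n + 1),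
        bp n i x * bp n j y * f ((i + j : ℝ) / (2 * n)) := by
  have hnn : (0:ℝ) < (n:ℝ) := by exact_mod_cast hn
  set g : ℕ → ℝ := fun k => f ((k:ℝ) / (2*(n:ℝ))) with hg
  have hconv : ∀ u, u + 2 ≤ 2*n → 2 * g (u+1) ≤ g u + g (u+2) := by
    intro u hu
    have hu2 : ((u:ℝ) + 2) ≤ 2*(n:ℝ) := by exact_mod_cast hu
    have hd : (0:ℝ) < 2*(n:ℝ) := by linarith
    have hp : (u:ℝ)/(2*(n:ℝ)) ∈ Set.Icc (0:ℝ) 1 := by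
      constructor
      · positivity
      · rw [div_le_one hd]; linarith
    have hq : ((u:ℝ)+2)/(2*(n:ℝ)) ∈ Set.Icc (0:ℝ) 1 := by
      constructor
      · positivity
      · rw [div_le_one hd]; exact hu2
    have h := hf_conv.2 hp hq (by norm_num : (0:ℝ) ≤ 1/2) (by norm_num : (0:ℝ) ≤ 1/2)
      (by norm_num : (1:ℝ)/2 + 1/2 = 1)
    rw [smul_eq_mul, smul_eq_mul, smul_eq_mul, smul_eq_mul] at h
    have hmid : (1:ℝ)/2 * ((u:ℝ)/(2*(n:ℝ))) + 1/2 * (((u:ℝ)+2)/(2*(n:ℝ)))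
        = ((u:ℝ)+1)/(2*(n:ℝ)) := by ring
    rw [hmid] at h
    simp only [hg]
    push_cast
    linarith
  have h := key x y hx hy n g hconv
  have hL : bern (2 * n) f ((x + y) / 2)
      = ∑ k ∈ Finset.range (2*n+1), bp (2*n) k ((x+y)/2) * g k := by
    unfold bern
    apply Finset.sum_congr rfl
    intro k _
    simp only [hg]
    push_cast
    ring_nf
  have hR : ∑ i ∈ Finset.range (n + 1), ∑ j ∈ Finset.range (n + 1),
        bp n i x * bp n j y * f ((i + j : ℝ) / (2 * n))
      = ∑ i ∈ Finset.range (n+1), ∑ j ∈ Finset.range (n+1), bp n i x * bp n j y * g (i+j) := by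
    apply Finset.sum_congr rfl
    intro i _
    apply Finset.sum_congr rfl
    intro j _
    simp only [hg]
    push_cast
    ring_nf
  rw [ge_iff_le, hL, hR]
  exact h
end

section
/- For n ≥ 1, x, y ∈ ℝ, and any function f defined on {k/(2n) : 0 ≤ k ≤ 2n}, one has ∑_{i=0}^{n} ∑_{j=0}^{n} p_{n,i}(x)·p_{n,j}(y)·f((i+j)/(2n)) = ∑_{k=0}^{2n} f(k/(2n))·(1/k!)·(∂/∂z)^k [(1+xz)^n (1+yz)^n] evaluated at z = −1. -/
open Polynomial Finset

lemma bp_eq_zero {n ν : ℕ} (h : n < ν) (t : ℝ) : bp n ν t = 0 := by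
  simp [bp, Nat.choose_eq_zero_of_lt h]

lemma iter_poly (p : ℝ[X]) (k : ℕ) (z0 : ℝ) :
    iteratedDeriv k (fun z : ℝ => p.eval z) z0 = (Polynomial.derivative^[k] p).eval z0 := by
  induction k generalizing z0 with
  | zero => simp
  | succ k ih =>
    rw [iteratedDeriv_succ, Function.iterate_succ_apply']
    have : iteratedDeriv k (fun z : ℝ => p.eval z)
        = fun z => (Polynomial.derivative^[k] p).eval z := funext fun z => ih z
    rw [this]
    exact (Polynomial.derivative^[k] p).deriv

lemma coeff_aux (a b : ℝ) (n i : ℕ) :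
    ((Polynomial.C b * X + Polynomial.C a) ^ n).coeff i
      = (n.choose i : ℝ) * b ^ i * a ^ (n - i) := by
  rw [add_pow, Polynomial.finset_sum_coeff]
  have h : ∀ k ∈ Finset.range (n + 1),
      ((Polynomial.C b * X) ^ k * Polynomial.C a ^ (n - k) * (n.choose k : ℝ[X])).coeff i
        = if i = k then (n.choose k : ℝ) * b ^ k * a ^ (n - k) else 0 := by
    intro k _
    have h1 : (Polynomial.C b * X) ^ k * Polynomial.C a ^ (n - k) * (n.choose k : ℝ[X])
        = Polynomial.C ((n.choose k : ℝ) * b ^ k * a ^ (n - k)) * X ^ k := by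
      rw [← Polynomial.C_eq_natCast, mul_pow, ← Polynomial.C_pow, ← Polynomial.C_pow,
        map_mul, map_mul]
      ring
    rw [h1, Polynomial.coeff_C_mul_X_pow]
  rw [Finset.sum_congr rfl h,
    Finset.sum_ite_eq (Finset.range (n + 1)) i (fun k => (n.choose k : ℝ) * b ^ k * a ^ (n - k))]
  split_ifs with hmem
  · rfl
  · rw [Finset.mem_range, not_lt] at hmem
    rw [Nat.choose_eq_zero_of_lt (by omega), Nat.cast_zero, zero_mul, zero_mul]

lemma key_s7 (n k : ℕ) (x y : ℝ) :
    iteratedDeriv k (fun z : ℝ => (1 + x * z) ^ n * (1 + y * z) ^ n) (-1)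
      = (k.factorial : ℝ) *
        ∑ p ∈ Finset.HasAntidiagonal.antidiagonal k, bp n p.1 x * bp n p.2 y := by
  set R : ℝ[X] := (1 + Polynomial.C x * X) ^ n * (1 + Polynomial.C y * X) ^ n with hR
  have hfun : (fun z : ℝ => (1 + x * z) ^ n * (1 + y * z) ^ n) = fun z => R.eval z := by
    funext z; simp [hR]
  rw [hfun, iter_poly]
  have hd : Polynomial.derivative^[k] R = k.factorial • Polynomial.hasseDeriv k R := by
    rw [← Polynomial.factorial_smul_hasseDeriv]; rfl
  rw [hd]
  have h2 : (k.factorial • Polynomial.hasseDeriv k R).eval (-1)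
      = (k.factorial : ℝ) * (Polynomial.hasseDeriv k R).eval (-1) := by
    simp [nsmul_eq_mul]
  rw [h2, ← Polynomial.taylor_coeff]
  congr 1
  have hT : Polynomial.taylor (-1 : ℝ) R
      = (Polynomial.C x * X + Polynomial.C (1 - x)) ^ n *
        (Polynomial.C y * X + Polynomial.C (1 - y)) ^ n := by
    rw [hR, Polynomial.taylor_apply]
    rw [Polynomial.mul_comp, Polynomial.pow_comp, Polynomial.pow_comp,
      Polynomial.add_comp, Polynomial.add_comp, Polynomial.one_comp,
      Polynomial.mul_comp, Polynomial.mul_comp, Polynomial.C_comp, Polynomial.C_comp,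
      Polynomial.X_comp]
    congr 2 <;> · rw [map_sub, map_one, map_neg, map_one]; ring
  rw [hT, Polynomial.coeff_mul]
  refine Finset.sum_congr rfl fun p _ => ?_
  rw [coeff_aux, coeff_aux, bp, bp]

theorem stmt_7 (n : ℕ) (hn : 1 ≤ n) (x y : ℝ) (f : ℝ → ℝ) :
    ∑ i ∈ Finset.range (n + 1), ∑ j ∈ Finset.range (n + 1),
        bp n i x * bp n j y * f ((i + j : ℝ) / (2 * n)) =
      ∑ k ∈ Finset.range (2 * n + 1),
        f ((k : ℝ) / (2 * n)) * (1 / (k.factorial : ℝ)) *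
          iteratedDeriv k (fun z : ℝ => (1 + x * z) ^ n * (1 + y * z) ^ n) (-1) := by
  have hrhs : ∀ k ∈ Finset.range (2 * n + 1),
      f ((k : ℝ) / (2 * n)) * (1 / (k.factorial : ℝ)) *
          iteratedDeriv k (fun z : ℝ => (1 + x * z) ^ n * (1 + y * z) ^ n) (-1)
        = ∑ p ∈ Finset.HasAntidiagonal.antidiagonal k,
            bp n p.1 x * bp n p.2 y * f ((p.1 + p.2 : ℝ) / (2 * n)) := by
    intro k _
    rw [key_s7 n k x y]
    have hf : (k.factorial : ℝ) ≠ 0 := Nat.cast_ne_zero.mpr k.factorial_ne_zero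
    rw [← mul_assoc, Finset.mul_sum]
    refine Finset.sum_congr rfl fun p hp => ?_
    have hpk : p.1 + p.2 = k := Finset.HasAntidiagonal.mem_antidiagonal.mp hp
    have hc : ((p.1 : ℝ) + p.2) = (k : ℝ) := by exact_mod_cast congrArg Nat.cast hpk
    rw [hc]
    field_simp
  rw [Finset.sum_congr rfl hrhs]
  set g : ℕ × ℕ → ℝ := fun p => bp n p.1 x * bp n p.2 y * f ((p.1 + p.2 : ℝ) / (2 * n)) with hg
  set S : Finset (ℕ × ℕ) := Finset.range (2 * n + 1) ×ˢ Finset.range (2 * n + 1) with hS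
  have hanti : ∀ k ∈ Finset.range (2 * n + 1),
      ∑ p ∈ Finset.HasAntidiagonal.antidiagonal k, g p
        = ∑ p ∈ S, if p.1 + p.2 = k then g p else 0 := by
    intro k hk
    rw [Finset.mem_range] at hk
    rw [← Finset.sum_filter]
    congr 1
    ext p
    simp only [Finset.HasAntidiagonal.mem_antidiagonal, Finset.mem_filter, hS, Finset.mem_product,
      Finset.mem_range]
    constructor
    · intro h; exact ⟨⟨by omega, by omega⟩, h⟩
    · exact fun h => h.2
  rw [Finset.sum_congr rfl hanti]
  rw [show (∑ k ∈ Finset.range (2 * n + 1), ∑ p ∈ S, if p.1 + p.2 = k then g p else 0)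
      = ∑ p ∈ S, ∑ k ∈ Finset.range (2 * n + 1), if p.1 + p.2 = k then g p else 0
    from Finset.sum_comm]
  have hinner : ∀ p ∈ S, (∑ k ∈ Finset.range (2 * n + 1), if p.1 + p.2 = k then g p else 0)
      = if p.1 + p.2 ∈ Finset.range (2 * n + 1) then g p else 0 := by
    intro p _
    exact Finset.sum_ite_eq (Finset.range (2 * n + 1)) (p.1 + p.2) (fun _ => g p)
  rw [Finset.sum_congr rfl hinner]
  set T : Finset (ℕ × ℕ) := Finset.range (n + 1) ×ˢ Finset.range (n + 1) with hT
  have hsub : T ⊆ S := by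
    intro p hp
    rw [hT, Finset.mem_product, Finset.mem_range, Finset.mem_range] at hp
    rw [hS, Finset.mem_product, Finset.mem_range, Finset.mem_range]
    omega
  have hvan : ∀ p ∈ S, p ∉ T →
      (if p.1 + p.2 ∈ Finset.range (2 * n + 1) then g p else 0) = 0 := by
    intro p _ hpT
    rw [hT, Finset.mem_product, Finset.mem_range, Finset.mem_range] at hpT
    push_neg at hpT
    have hg0 : g p = 0 := by
      by_cases h1 : n + 1 ≤ p.1
      · simp [hg, bp_eq_zero (by omega : n < p.1)]
      · have h2 := hpT (by omega)
        simp [hg, bp_eq_zero (by omega : n < p.2)]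
    split_ifs <;> simp [hg0]
  have step1 : (∑ p ∈ S, if p.1 + p.2 ∈ Finset.range (2 * n + 1) then g p else 0)
      = ∑ p ∈ T, if p.1 + p.2 ∈ Finset.range (2 * n + 1) then g p else 0 :=
    (Finset.sum_subset hsub hvan).symm
  have step2 : (∑ p ∈ T, if p.1 + p.2 ∈ Finset.range (2 * n + 1) then g p else 0)
      = ∑ p ∈ T, g p := by
    refine Finset.sum_congr rfl fun p hp => ?_
    rw [hT, Finset.mem_product, Finset.mem_range, Finset.mem_range] at hp
    rw [if_pos]
    rw [Finset.mem_range]; omega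
  rw [step1, step2, hT, ← Finset.sum_product']
end

section
/- Let n ≥ 1 and let f : [0,1] → ℝ be continuous and convex. Then for all x, y ∈ [0,1], (B_{2n}f)(x) + (B_{2n}f)(y) ≥ 2·∑_{i=0}^{n} ∑_{j=0}^{n} p_{n,i}(x)·p_{n,j}(y)·f((i+j)/(2n)). -/
open Finset

lemma bp_sum (n : ℕ) (t : ℝ) : ∑ i ∈ range (n + 1), bp n i t = 1 := by
  have h := add_pow t (1 - t) n
  simp only [add_sub_cancel, one_pow] at h
  rw [h]
  exact Finset.sum_congr rfl fun i _ => by unfold bp; ring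

lemma abel_sum (w b : ℕ → ℝ) (n : ℕ) :
    ∑ i ∈ range (n + 1), w i * b i =
      (∑ i ∈ range (n + 1), w i) * b n +
        ∑ k ∈ range n, (∑ i ∈ range (k + 1), w i) * (b k - b (k + 1)) := by
  induction n with
  | zero => simp
  | succ n ih =>
    rw [Finset.sum_range_succ (f := fun i => w i * b i), ih,
      Finset.sum_range_succ (f := fun k => (∑ i ∈ range (k + 1), w i) * (b k - b (k + 1))),
      Finset.sum_range_succ (f := w) (n + 1), Finset.sum_range_succ (f := w) n]
    ring

lemma choose_fiber (n k : ℕ) :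
    ∑ p ∈ (range (n+1) ×ˢ range (n+1)).filter (fun p => p.1 + p.2 = k),
      n.choose p.1 * n.choose p.2 = (2*n).choose k := by
  rw [two_mul, Nat.add_choose_eq]
  apply Finset.sum_subset
  · intro p hp
    simp only [Finset.mem_filter] at hp
    simp [Finset.mem_antidiagonal, hp.2]
  · intro p hp hnp
    simp only [Finset.HasAntidiagonal.mem_antidiagonal] at hp
    simp only [Finset.mem_filter, Finset.mem_product, Finset.mem_range, not_and] at hnp
    by_cases h1 : p.1 < n + 1
    · by_cases h2 : p.2 < n + 1
      · exact absurd hp (hnp ⟨h1, h2⟩)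
      · rw [Nat.choose_eq_zero_of_lt (by omega : n < p.2)]; ring
    · rw [Nat.choose_eq_zero_of_lt (by omega : n < p.1)]; ring

lemma bern_eq_double (n : ℕ) (f : ℝ → ℝ) (t : ℝ) :
    bern (2*n) f t = ∑ i ∈ range (n+1), ∑ j ∈ range (n+1),
      bp n i t * bp n j t * f ((i + j : ℝ)/(2*n)) := by
  rw [← Finset.sum_product']
  have key := Finset.sum_fiberwise_of_maps_to (s := range (n+1) ×ˢ range (n+1))
    (t := range (2*n+1)) (g := fun p => p.1 + p.2)
    (fun p hp => by
      simp only [Finset.mem_product, Finset.mem_range] at hp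
      simp only [Finset.mem_range]; omega)
    (fun p => bp n p.1 t * bp n p.2 t * f ((p.1 + p.2 : ℝ)/(2*n)))
  rw [← key]
  unfold bern
  apply Finset.sum_congr rfl
  intro k hk
  have : ∀ p ∈ (range (n+1) ×ˢ range (n+1)).filter (fun p => p.1 + p.2 = k),
      bp n p.1 t * bp n p.2 t * f ((p.1 + p.2 : ℝ)/(2*n))
        = (n.choose p.1 * n.choose p.2 : ℕ) * (t ^ k * (1-t) ^ (2*n - k) * f ((k:ℝ)/(2*n))) := by
    intro p hp
    simp only [Finset.mem_filter, Finset.mem_product, Finset.mem_range] at hp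
    obtain ⟨⟨h1, h2⟩, h3⟩ := hp
    have e1 : (n - p.1) + (n - p.2) = 2*n - k := by omega
    have e2 : ((p.1 : ℝ) + p.2) = (k : ℝ) := by exact_mod_cast congrArg Nat.cast h3
    unfold bp
    rw [← e1, ← h3, pow_add, pow_add]
    push_cast
    ring
  rw [Finset.sum_congr rfl this, ← Finset.sum_mul]
  rw [← Nat.cast_sum, choose_fiber n k]
  unfold bp
  push_cast
  ring

noncomputable def bpD (n i : ℕ) (t : ℝ) : ℝ :=
  (n.choose i : ℝ) * i * t ^ (i - 1) * (1 - t) ^ (n - i)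

lemma bp_hasDerivAt (n i : ℕ) (t : ℝ) :
    HasDerivAt (bp n i) (bpD n i t - bpD n (i+1) t) t := by
  have h1 : HasDerivAt (fun s : ℝ => s ^ i) ((i : ℝ) * t ^ (i-1)) t := hasDerivAt_pow i t
  have hin : HasDerivAt (fun s : ℝ => 1 - s) (-1 : ℝ) t := by
    simpa using (hasDerivAt_id' t).const_sub (1:ℝ)
  have h2 : HasDerivAt (fun s : ℝ => (1 - s) ^ (n - i))
      ((((n - i : ℕ) : ℝ) * (1 - t) ^ (n - i - 1)) * (-1)) t :=
    HasDerivAt.comp t (hasDerivAt_pow (n - i) (1 - t)) hin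
  have hm := ((h1.mul h2).const_mul ((n.choose i : ℝ)))
  have heq : bp n i = fun s : ℝ => (n.choose i : ℝ) * (s ^ i * (1 - s) ^ (n - i)) := by
    funext s; unfold bp; ring
  rw [heq]
  refine hm.congr_deriv (Eq.symm ?_)
  have hc : ((n.choose (i+1) * (i+1) : ℕ) : ℝ) = ((n.choose i * (n - i) : ℕ) : ℝ) := by
    exact_mod_cast congrArg Nat.cast (Nat.choose_succ_right_eq n i)
  push_cast at hc
  unfold bpD
  have e1 : n - (i+1) = n - i - 1 := by omega
  rw [e1]
  push_cast
  linear_combination (-(t ^ i * (1 - t) ^ (n - i - 1))) * hc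

lemma P_hasDerivAt (n k : ℕ) (t : ℝ) :
    HasDerivAt (fun s => ∑ i ∈ range (k+1), bp n i s) (- bpD n (k+1) t) t := by
  have h := HasDerivAt.fun_sum (u := range (k+1)) (A := fun i => bp n i)
    (A' := fun i => bpD n i t - bpD n (i+1) t) (fun i _ => bp_hasDerivAt n i t)
  refine h.congr_deriv ?_
  rw [Finset.sum_range_sub' (f := fun i => bpD n i t)]
  simp [bpD]

lemma P_antitone (n k : ℕ) :
    AntitoneOn (fun s => ∑ i ∈ range (k+1), bp n i s) (Set.Icc (0:ℝ) 1) := by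
  apply antitoneOn_of_deriv_nonpos (convex_Icc 0 1)
  · apply Continuous.continuousOn
    apply continuous_finset_sum
    intro i _
    unfold bp
    fun_prop
  · intro t _
    exact (P_hasDerivAt n k t).differentiableAt.differentiableWithinAt
  · intro t ht
    rw [interior_Icc] at ht
    rw [(P_hasDerivAt n k t).deriv]
    have h0 : (0:ℝ) ≤ t := le_of_lt ht.1
    have h1 : (0:ℝ) ≤ 1 - t := by linarith [ht.2]
    have : 0 ≤ bpD n (k+1) t := by
      unfold bpD
      positivity
    linarith

lemma rasa_key (n : ℕ) (hn : 1 ≤ n) (f : ℝ → ℝ)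
    (hf_conv : ConvexOn ℝ (Set.Icc (0 : ℝ) 1) f)
    (x y : ℝ) (hx : x ∈ Set.Icc (0 : ℝ) 1) (hy : y ∈ Set.Icc (0 : ℝ) 1) (hxy : x ≤ y) :
    bern (2 * n) f x + bern (2 * n) f y ≥
      2 * ∑ i ∈ Finset.range (n + 1), ∑ j ∈ Finset.range (n + 1),
        bp n i x * bp n j y * f ((i + j : ℝ) / (2 * n)) := by
  set a : ℕ → ℝ := fun k => f ((k : ℝ) / (2 * n)) with ha
  set S : ℝ → ℝ → ℝ := fun s u => ∑ i ∈ range (n+1), ∑ j ∈ range (n+1),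
    bp n i s * bp n j u * a (i+j) with hS
  have hfa : ∀ s u : ℝ, (∑ i ∈ range (n+1), ∑ j ∈ range (n+1),
      bp n i s * bp n j u * f ((i + j : ℝ)/(2*n))) = S s u := by
    intro s u
    apply Finset.sum_congr rfl; intro i _
    apply Finset.sum_congr rfl; intro j _
    congr 1
    rw [ha]
    congr 1
    push_cast
    ring
  have hbd : ∀ t : ℝ, bern (2*n) f t = S t t := fun t => by rw [bern_eq_double, hfa]
  set w : ℕ → ℝ := fun i => bp n i x - bp n i y with hwdef
  set W : ℕ → ℝ := fun k => ∑ i ∈ range (k+1), w i with hWdef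
  have hW : ∑ i ∈ range (n+1), w i = 0 := by
    rw [hwdef]
    rw [Finset.sum_sub_distrib, bp_sum, bp_sum]
    ring
  have habel1 : ∀ c : ℕ → ℝ, ∑ i ∈ range (n+1), w i * c i
      = ∑ k ∈ range n, W k * (c k - c (k+1)) := by
    intro c
    rw [abel_sum w c n, hW, zero_mul, zero_add]
  -- the quadratic form
  have hQ : ∑ i ∈ range (n+1), w i * (∑ j ∈ range (n+1), w j * a (i+j))
      = S x x - S x y - (S y x - S y y) := by
    have hterm : ∀ i ∈ range (n+1), w i * (∑ j ∈ range (n+1), w j * a (i+j))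
        = ∑ j ∈ range (n+1), (bp n i x * bp n j x * a (i+j) - bp n i x * bp n j y * a (i+j)
            - (bp n i y * bp n j x * a (i+j) - bp n i y * bp n j y * a (i+j))) := by
      intro i _
      rw [Finset.mul_sum]
      exact Finset.sum_congr rfl fun j _ => by rw [hwdef]; ring
    rw [Finset.sum_congr rfl hterm]
    simp only [Finset.sum_sub_distrib]
    rfl
  have hsymm : S y x = S x y := by
    rw [hS]
    simp only
    rw [Finset.sum_comm]
    apply Finset.sum_congr rfl; intro i _
    apply Finset.sum_congr rfl; intro j _
    rw [Nat.add_comm j i]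
    ring
  -- Abel summation twice
  have step1 : ∑ i ∈ range (n+1), w i * (∑ j ∈ range (n+1), w j * a (i+j))
      = ∑ i ∈ range (n+1), w i * (∑ l ∈ range n, W l * (a (i+l) - a (i+(l+1)))) := by
    apply Finset.sum_congr rfl; intro i _
    rw [habel1 (fun j => a (i+j))]
  have step2 : ∑ i ∈ range (n+1), w i * (∑ l ∈ range n, W l * (a (i+l) - a (i+(l+1))))
      = ∑ l ∈ range n, W l * (∑ i ∈ range (n+1), w i * (a (i+l) - a (i+(l+1)))) := by
    calc ∑ i ∈ range (n+1), w i * (∑ l ∈ range n, W l * (a (i+l) - a (i+(l+1))))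
        = ∑ i ∈ range (n+1), ∑ l ∈ range n, w i * (W l * (a (i+l) - a (i+(l+1)))) :=
          Finset.sum_congr rfl fun i _ => Finset.mul_sum _ _ _
      _ = ∑ l ∈ range n, ∑ i ∈ range (n+1), w i * (W l * (a (i+l) - a (i+(l+1)))) :=
          Finset.sum_comm
      _ = ∑ l ∈ range n, W l * (∑ i ∈ range (n+1), w i * (a (i+l) - a (i+(l+1)))) := by
          apply Finset.sum_congr rfl; intro l _
          rw [Finset.mul_sum]
          exact Finset.sum_congr rfl fun i _ => by ring
  have step3 : ∑ l ∈ range n, W l * (∑ i ∈ range (n+1), w i * (a (i+l) - a (i+(l+1))))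
      = ∑ l ∈ range n, ∑ k ∈ range n,
          W l * (W k * (a (k+l) - 2*a (k+l+1) + a (k+l+2))) := by
    apply Finset.sum_congr rfl; intro l _
    rw [habel1 (fun i => a (i+l) - a (i+(l+1))), Finset.mul_sum]
    apply Finset.sum_congr rfl; intro k _
    have e1 : k + (l+1) = k + l + 1 := by omega
    have e2 : k + 1 + l = k + l + 1 := by omega
    have e3 : k + 1 + (l+1) = k + l + 2 := by omega
    simp only [e1, e2, e3]
    ring
  -- positivity of the pieces
  have hn2 : (0:ℝ) < 2 * n := by
    have : (1:ℝ) ≤ (n:ℝ) := by exact_mod_cast hn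
    linarith
  have hWnn : ∀ k, 0 ≤ W k := by
    intro k
    have h := P_antitone n k hx hy hxy
    simp only at h
    rw [hWdef]
    simp only
    rw [hwdef]
    rw [Finset.sum_sub_distrib]
    linarith
  have hconv : ∀ m : ℕ, m + 2 ≤ 2*n → 0 ≤ a m - 2*a (m+1) + a (m+2) := by
    intro m hm
    have hmr : ((m:ℝ) + 2) ≤ 2 * n := by exact_mod_cast Nat.cast_le.mpr hm
    have hu : (m:ℝ)/(2*n) ∈ Set.Icc (0:ℝ) 1 := by
      constructor
      · positivity
      · rw [div_le_one hn2]; linarith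
    have hv : ((m:ℝ)+2)/(2*n) ∈ Set.Icc (0:ℝ) 1 := by
      constructor
      · positivity
      · rw [div_le_one hn2]; linarith
    have hc := hf_conv.2 hu hv (by norm_num : (0:ℝ) ≤ 1/2) (by norm_num : (0:ℝ) ≤ 1/2)
      (by norm_num : (1:ℝ)/2 + 1/2 = 1)
    simp only [smul_eq_mul] at hc
    have harg : (1/2 : ℝ) * ((m:ℝ)/(2*n)) + (1/2 : ℝ) * (((m:ℝ)+2)/(2*n))
        = ((m:ℝ)+1)/(2*n) := by
      field_simp
      ring
    rw [harg] at hc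
    have ea1 : a m = f ((m:ℝ)/(2*n)) := rfl
    have ea2 : a (m+1) = f (((m:ℝ)+1)/(2*n)) := by rw [ha]; push_cast; ring_nf
    have ea3 : a (m+2) = f (((m:ℝ)+2)/(2*n)) := by rw [ha]; push_cast; ring_nf
    rw [ea1, ea2, ea3]
    linarith
  have hQnn : 0 ≤ ∑ l ∈ range n, ∑ k ∈ range n,
      W l * (W k * (a (k+l) - 2*a (k+l+1) + a (k+l+2))) := by
    apply Finset.sum_nonneg
    intro l hl
    apply Finset.sum_nonneg
    intro k hk
    apply mul_nonneg (hWnn l)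
    apply mul_nonneg (hWnn k)
    have hb : (k + l) + 2 ≤ 2*n := by
      simp only [Finset.mem_range] at hl hk
      omega
    have := hconv (k+l) hb
    linarith
  rw [hbd x, hbd y, hfa x y]
  have hfin : 0 ≤ S x x - S x y - (S y x - S y y) := by
    rw [← hQ, step1, step2, step3]
    exact hQnn
  rw [hsymm] at hfin
  linarith

theorem stmt_9 (n : ℕ) (hn : 1 ≤ n) (f : ℝ → ℝ)
    (hf_cont : ContinuousOn f (Set.Icc (0 : ℝ) 1))
    (hf_conv : ConvexOn ℝ (Set.Icc (0 : ℝ) 1) f)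
    (x y : ℝ) (hx : x ∈ Set.Icc (0 : ℝ) 1) (hy : y ∈ Set.Icc (0 : ℝ) 1) :
    bern (2 * n) f x + bern (2 * n) f y ≥
      2 * ∑ i ∈ Finset.range (n + 1), ∑ j ∈ Finset.range (n + 1),
        bp n i x * bp n j y * f ((i + j : ℝ) / (2 * n)) := by
  rcases le_total x y with h | h
  · exact rasa_key n hn f hf_conv x y hx hy h
  · have key := rasa_key n hn f hf_conv y x hy hx h
    have hsymm : (∑ i ∈ Finset.range (n + 1), ∑ j ∈ Finset.range (n + 1),
        bp n i y * bp n j x * f ((i + j : ℝ) / (2 * n)))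
      = ∑ i ∈ Finset.range (n + 1), ∑ j ∈ Finset.range (n + 1),
        bp n i x * bp n j y * f ((i + j : ℝ) / (2 * n)) := by
      rw [Finset.sum_comm]
      apply Finset.sum_congr rfl; intro i _
      apply Finset.sum_congr rfl; intro j _
      rw [add_comm (j:ℝ) (i:ℝ)]
      ring
    rw [hsymm] at key
    linarith
end
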